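/- arXiv:2006.13720 — 7 statements merged into one kernel-verified Lean document; each statement's English description precedes it below -/
import Mathlib

section
/- Let R be a (not necessarily commutative) unital ring, and let X, P, c ∈ R with c central in R and X*P − P*X = c. Then 4•⁅X³, P³⁆ − 3•⁅X²*P + P*X², X*P² + P²*X⁆ = 12•c³. In particular, if 12•c³ ≠ 0 then the equality (1/3)⁅X³,P³⁆ = (1/4)⁅X²P+PX², XP²+P²X⁆, which would be forced by Dirac's bracket condition applied to {x³,p³} = 9x²p² = 3{x²p, xp²}, fails. -/
theorem dirac_condition_fails (R : Type*) [Ring R] (X P c : R)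
    (hc : ∀ a : R, c * a = a * c) (h : X * P - P * X = c) :
    4 • ⁅X ^ 3, P ^ 3⁆ - 3 • ⁅X ^ 2 * P + P * X ^ 2, X * P ^ 2 + P ^ 2 * X⁆ = 12 • c ^ 3 := by
  have hXP : X * P = P * X + c := by rw [← h]; noncomm_ring
  have r2 : ∀ a : R, X * (P * a) = P * (X * a) + c * a := by
    intro a; rw [← mul_assoc, hXP]; noncomm_ring
  have xc : X * c = c * X := (hc X).symm
  have pc : P * c = c * P := (hc P).symm
  have xca : ∀ a : R, X * (c * a) = c * (X * a) := by
    intro a; rw [← mul_assoc, xc, mul_assoc]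
  have pca : ∀ a : R, P * (c * a) = c * (P * a) := by
    intro a; rw [← mul_assoc, pc, mul_assoc]
  simp only [Ring.lie_def]
  simp only [pow_succ, pow_zero, one_mul, mul_add, add_mul, mul_assoc, r2, hXP, xc, pc, xca, pca,
    mul_one]
  abel
end

section
/- Let R be a (not necessarily commutative) unital ring, and let X, P, c ∈ R with c central in R and X*P − P*X = c. Then ⁅X²*P + P*X², X*P² + P²*X⁆ = 12•c*P²*X² + 24•c²*P*X + 4•c³. -/
theorem commutator_mixed_cubics (R : Type*) [Ring R] (X P c : R)
    (hc : ∀ a : R, c * a = a * c) (h : X * P - P * X = c) :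
    ⁅X ^ 2 * P + P * X ^ 2, X * P ^ 2 + P ^ 2 * X⁆ =
      12 • (c * P ^ 2 * X ^ 2) + 24 • (c ^ 2 * P * X) + 4 • c ^ 3 := by
  have hXP : X * P = P * X + c := by rw [← h]; noncomm_ring
  have hXPa : ∀ a : R, X * (P * a) = P * (X * a) + c * a := fun a => by
    rw [← mul_assoc, hXP]; noncomm_ring
  have hc' : ∀ a b : R, a * (c * b) = c * (a * b) := fun a b => by
    rw [← mul_assoc, ← hc, mul_assoc]
  have hcc : ∀ a : R, a * c = c * a := fun a => (hc a).symm
  simp only [Ring.lie_def, pow_succ, pow_zero, one_mul, mul_add, add_mul, mul_assoc, hXP, hXPa, hc', hcc, mul_one]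

  abel
end

section
/- Let A be a unital associative algebra over ℂ, let X, P ∈ A and ℏ ∈ ℂ with X*P − P*X = ℏ•1. Then there exists a ℂ-linear map Q : ℂ[x,p] → A with Q(1) = 1, Q(x) = X, Q(p) = P, Q(x²) = X², Q(p²) = P², Q(xp) = (X*P + P*X)/2, such that Q(f)*Q(g) − Q(g)*Q(f) = ℏ • Q({f,g}) for all polynomials f, g ∈ ℂ[x,p] of total degree at most 2. (The subalgebra {1,x,p,x²,p²,xp} can be consistently quantized.) -/
open MvPolynomial

/-- The Poisson bracket on `ℂ[x,p]`: `{f,g} = (∂f/∂x)(∂g/∂p) − (∂f/∂p)(∂g/∂x)`. -/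
noncomputable def poissonBracket (f g : MvPolynomial (Fin 2) ℂ) : MvPolynomial (Fin 2) ℂ :=
  pderiv 0 f * pderiv 1 g - pderiv 1 f * pderiv 0 g

section Aux

local notation "MvP" => MvPolynomial (Fin 2) ℂ

/-- The quantization map. -/
noncomputable def Qdef (A : Type*) [Ring A] [Algebra ℂ A] (Xop Pop : A) :
    MvPolynomial (Fin 2) ℂ →ₗ[ℂ] A where
  toFun f := coeff 0 f • (1:A) + coeff (Finsupp.single 0 1) f • Xop +
    coeff (Finsupp.single 1 1) f • Pop + coeff (Finsupp.single 0 2) f • (Xop^2) +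
    coeff (Finsupp.single 1 2) f • (Pop^2) +
    coeff (Finsupp.single 0 1 + Finsupp.single 1 1) f • ((2⁻¹:ℂ) • (Xop*Pop+Pop*Xop))
  map_add' f g := by simp only [coeff_add, add_smul]; abel
  map_smul' c f := by simp only [coeff_smul, smul_eq_mul, mul_smul, RingHom.id_apply, smul_add]

variable (A : Type*) [Ring A] [Algebra ℂ A] (Xop Pop : A)

lemma q_one : Qdef A Xop Pop 1 = 1 := by
  simp [Qdef, coeff_one, Finsupp.ext_iff, Fin.forall_fin_two, Finsupp.single_apply,
    Finsupp.add_apply]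

lemma q_x : Qdef A Xop Pop (X 0) = Xop := by
  simp [Qdef, coeff_X', Finsupp.ext_iff, Fin.forall_fin_two, Finsupp.single_apply,
    Finsupp.add_apply]

lemma q_p : Qdef A Xop Pop (X 1) = Pop := by
  simp [Qdef, coeff_X', Finsupp.ext_iff, Fin.forall_fin_two, Finsupp.single_apply,
    Finsupp.add_apply]

lemma q_x2 : Qdef A Xop Pop (X 0 ^ 2) = Xop ^ 2 := by
  simp [Qdef, coeff_X_pow, Finsupp.ext_iff, Fin.forall_fin_two, Finsupp.single_apply,
    Finsupp.add_apply]

lemma q_p2 : Qdef A Xop Pop (X 1 ^ 2) = Pop ^ 2 := by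
  simp [Qdef, coeff_X_pow, Finsupp.ext_iff, Fin.forall_fin_two, Finsupp.single_apply,
    Finsupp.add_apply]

lemma q_xp : Qdef A Xop Pop (X 0 * X 1) = (2⁻¹:ℂ) • (Xop*Pop+Pop*Xop) := by
  have h : (X 0 * X 1 : MvP) = monomial (Finsupp.single 0 1 + Finsupp.single 1 1) 1 := by
    rw [X, X, monomial_mul, one_mul]
  rw [h]
  simp [Qdef, coeff_monomial, Finsupp.ext_iff, Fin.forall_fin_two, Finsupp.single_apply,
    Finsupp.add_apply]

lemma mem_span_six (f : MvP) (hf : f.totalDegree ≤ 2) :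
    f ∈ Submodule.span ℂ ({1, X 0, X 1, X 0 ^ 2, X 1 ^ 2, X 0 * X 1} : Set MvP) := by
  have hone' : (1 : MvP) = monomial 0 1 := rfl
  have hX' : ∀ i : Fin 2, (X i : MvP) = monomial (Finsupp.single i 1) 1 := fun _ => rfl
  rw [f.as_sum]
  apply Submodule.sum_mem
  intro d hd
  have hdeg : (d.sum fun _ e => e) ≤ 2 := le_trans (le_totalDegree hd) hf
  have hsum : (d.sum fun _ e => e) = d 0 + d 1 := by
    rw [Finsupp.sum_fintype _ _ (fun _ => rfl), Fin.sum_univ_two]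
  have hd' : d = Finsupp.single 0 (d 0) + Finsupp.single 1 (d 1) := by
    ext i; fin_cases i <;> simp
  rw [hsum] at hdeg
  have hmono : monomial d (coeff d f) = coeff d f • monomial d 1 := by
    rw [smul_monomial, smul_eq_mul, mul_one]
  rw [hmono]
  apply Submodule.smul_mem
  apply Submodule.subset_span
  rw [hd']
  set a := d 0 with ha'; set b := d 1 with hb'
  clear_value a b
  have ha : a ≤ 2 := by omega
  have hb : b ≤ 2 := by omega
  interval_cases a <;> interval_cases b <;>
    first
    | (exfalso; omega)
    | (simp only [X_pow_eq_monomial]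
       simp only [hone', hX', monomial_mul, mul_one]
       try simp only [Finsupp.single_zero, add_zero, zero_add]
       simp [Set.mem_insert_iff])

-- Poisson bracket linearity
lemma pb_add_left (f f' g : MvP) :
    poissonBracket (f + f') g = poissonBracket f g + poissonBracket f' g := by
  simp only [poissonBracket, map_add]; ring

lemma pb_add_right (f g g' : MvP) :
    poissonBracket f (g + g') = poissonBracket f g + poissonBracket f g' := by
  simp only [poissonBracket, map_add]; ring

lemma pb_smul_left (c : ℂ) (f g : MvP) :
    poissonBracket (c • f) g = c • poissonBracket f g := by
  simp only [poissonBracket, Derivation.map_smul, smul_sub, smul_mul_assoc]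

lemma pb_smul_right (c : ℂ) (f g : MvP) :
    poissonBracket f (c • g) = c • poissonBracket f g := by
  simp only [poissonBracket, Derivation.map_smul, smul_sub, mul_smul_comm]

lemma pb_zero_left (g : MvP) : poissonBracket 0 g = 0 := by
  simp [poissonBracket]

lemma pb_zero_right (f : MvP) : poissonBracket f 0 = 0 := by
  simp [poissonBracket]

lemma pb_one_left (g : MvP) : poissonBracket 1 g = 0 := by
  simp [poissonBracket]

lemma pb_one_right (f : MvP) : poissonBracket f 1 = 0 := by
  simp [poissonBracket]

lemma pb_self (f : MvP) : poissonBracket f f = 0 := by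
  simp only [poissonBracket]; ring

-- Poisson bracket values on the basis
lemma pbv1 : poissonBracket (X 0) (X 1) = (1 : MvP) := by
  simp [poissonBracket]

lemma pbv2 : poissonBracket (X 1) (X 0) = (-1 : MvP) := by
  simp [poissonBracket]

lemma pbv3 : poissonBracket (X 0) (X 0 ^ 2) = (0 : MvP) := by
  simp [poissonBracket, pderiv_pow]

lemma pbv4 : poissonBracket (X 0 ^ 2) (X 0) = (0 : MvP) := by
  simp [poissonBracket, pderiv_pow]

lemma pbv5 : poissonBracket (X 1) (X 1 ^ 2) = (0 : MvP) := by
  simp [poissonBracket, pderiv_pow]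

lemma pbv6 : poissonBracket (X 1 ^ 2) (X 1) = (0 : MvP) := by
  simp [poissonBracket, pderiv_pow]

lemma pbv7 : poissonBracket (X 0) (X 1 ^ 2) = ((2:ℂ) • X 1 : MvP) := by
  simp [poissonBracket, pderiv_pow, smul_eq_C_mul, map_ofNat]

lemma pbv8 : poissonBracket (X 1 ^ 2) (X 0) = (-((2:ℂ) • X 1) : MvP) := by
  simp [poissonBracket, pderiv_pow, smul_eq_C_mul, map_ofNat]

lemma pbv9 : poissonBracket (X 1) (X 0 ^ 2) = (-((2:ℂ) • X 0) : MvP) := by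
  simp [poissonBracket, pderiv_pow, smul_eq_C_mul, map_ofNat]

lemma pbv10 : poissonBracket (X 0 ^ 2) (X 1) = ((2:ℂ) • X 0 : MvP) := by
  simp [poissonBracket, pderiv_pow, smul_eq_C_mul, map_ofNat]

lemma pbv11 : poissonBracket (X 0) (X 0 * X 1) = (X 0 : MvP) := by
  simp [poissonBracket]

lemma pbv12 : poissonBracket (X 0 * X 1) (X 0) = (-(X 0) : MvP) := by
  simp [poissonBracket]

lemma pbv13 : poissonBracket (X 1) (X 0 * X 1) = (-(X 1) : MvP) := by
  simp [poissonBracket]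

lemma pbv14 : poissonBracket (X 0 * X 1) (X 1) = (X 1 : MvP) := by
  simp [poissonBracket]

lemma pbv15 : poissonBracket (X 0 ^ 2) (X 1 ^ 2) = ((4:ℂ) • (X 0 * X 1) : MvP) := by
  simp [poissonBracket, pderiv_pow, smul_eq_C_mul, map_ofNat]
  ring

lemma pbv16 : poissonBracket (X 1 ^ 2) (X 0 ^ 2) = (-((4:ℂ) • (X 0 * X 1)) : MvP) := by
  simp [poissonBracket, pderiv_pow, smul_eq_C_mul, map_ofNat]
  ring

lemma pbv17 : poissonBracket (X 0 ^ 2) (X 0 * X 1) = ((2:ℂ) • X 0 ^ 2 : MvP) := by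
  simp [poissonBracket, pderiv_pow, smul_eq_C_mul, map_ofNat]
  ring

lemma pbv18 : poissonBracket (X 0 * X 1) (X 0 ^ 2) = (-((2:ℂ) • X 0 ^ 2) : MvP) := by
  simp [poissonBracket, pderiv_pow, smul_eq_C_mul, map_ofNat]
  ring

lemma pbv19 : poissonBracket (X 1 ^ 2) (X 0 * X 1) = (-((2:ℂ) • X 1 ^ 2) : MvP) := by
  simp [poissonBracket, pderiv_pow, smul_eq_C_mul, map_ofNat]
  ring

lemma pbv20 : poissonBracket (X 0 * X 1) (X 1 ^ 2) = ((2:ℂ) • X 1 ^ 2 : MvP) := by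
  simp [poissonBracket, pderiv_pow, smul_eq_C_mul, map_ofNat]
  ring

end Aux

/-- The subalgebra `{1, x, p, x², p², xp}` can be consistently quantized. -/
theorem quadratic_quantization_exists (A : Type*) [Ring A] [Algebra ℂ A]
    (Xop Pop : A) (ℏ : ℂ) (hcomm : Xop * Pop - Pop * Xop = ℏ • (1 : A)) :
    ∃ Q : MvPolynomial (Fin 2) ℂ →ₗ[ℂ] A,
      Q 1 = 1 ∧ Q (X 0) = Xop ∧ Q (X 1) = Pop ∧
      Q (X 0 ^ 2) = Xop ^ 2 ∧ Q (X 1 ^ 2) = Pop ^ 2 ∧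
      Q (X 0 * X 1) = (2⁻¹ : ℂ) • (Xop * Pop + Pop * Xop) ∧
      ∀ f g : MvPolynomial (Fin 2) ℂ, f.totalDegree ≤ 2 → g.totalDegree ≤ 2 →
        Q f * Q g - Q g * Q f = ℏ • Q (poissonBracket f g) := by
  refine ⟨Qdef A Xop Pop, q_one A Xop Pop, q_x A Xop Pop, q_p A Xop Pop, q_x2 A Xop Pop,
    q_p2 A Xop Pop, q_xp A Xop Pop, ?_⟩
  intro f g hf hg
  set Q := Qdef A Xop Pop with hQ
  have h1 : Xop * Pop = Pop * Xop + ℏ • 1 := by rw [← hcomm]; abel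
  have h1' : ∀ a : A, Xop * (Pop * a) = Pop * (Xop * a) + ℏ • a := by
    intro a
    rw [← mul_assoc, h1, add_mul, mul_assoc, smul_mul_assoc, one_mul]
  have hf' := mem_span_six f hf
  have hg' := mem_span_six g hg
  clear hf hg
  -- base cases
  have base : ∀ f₀ ∈ ({1, X 0, X 1, X 0 ^ 2, X 1 ^ 2, X 0 * X 1} : Set (MvPolynomial (Fin 2) ℂ)),
      ∀ g₀ ∈ ({1, X 0, X 1, X 0 ^ 2, X 1 ^ 2, X 0 * X 1} : Set (MvPolynomial (Fin 2) ℂ)),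
      Q f₀ * Q g₀ - Q g₀ * Q f₀ = ℏ • Q (poissonBracket f₀ g₀) := by
    intro f₀ hf₀ g₀ hg₀
    simp only [Set.mem_insert_iff, Set.mem_singleton_iff] at hf₀ hg₀
    rcases hf₀ with rfl|rfl|rfl|rfl|rfl|rfl <;> rcases hg₀ with rfl|rfl|rfl|rfl|rfl|rfl <;>
      simp only [hQ, pb_one_left, pb_one_right, pb_self, pbv1, pbv2, pbv3, pbv4, pbv5, pbv6,
        pbv7, pbv8, pbv9, pbv10, pbv11, pbv12, pbv13, pbv14, pbv15, pbv16, pbv17, pbv18,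
        pbv19, pbv20, map_zero, map_neg, map_smul, smul_zero, smul_neg,
        q_one, q_x, q_p, q_x2, q_p2, q_xp] <;>
      (try simp only [pow_two, mul_add, add_mul, mul_assoc, h1', h1, smul_add,
        mul_smul_comm, smul_mul_assoc, smul_smul, mul_one, one_mul]) <;>
      module
  -- induct on f for g in the base set
  have H1 : ∀ g₀ ∈ ({1, X 0, X 1, X 0 ^ 2, X 1 ^ 2, X 0 * X 1} : Set (MvPolynomial (Fin 2) ℂ)),
      Q f * Q g₀ - Q g₀ * Q f = ℏ • Q (poissonBracket f g₀) := by
    intro g₀ hg₀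
    induction hf' using Submodule.span_induction with
    | mem x hx => exact base x hx g₀ hg₀
    | zero => simp [pb_zero_left]
    | add x y hx hy ihx ihy =>
        rw [map_add, pb_add_left, map_add, smul_add, ← ihx, ← ihy]
        simp only [add_mul, mul_add]
        abel
    | smul c x hx ihx =>
        rw [map_smul, pb_smul_left, map_smul, smul_mul_assoc, mul_smul_comm, ← smul_sub, ihx,
          smul_comm]
  -- induct on g
  induction hg' using Submodule.span_induction with
  | mem x hx => exact H1 x hx
  | zero => simp [pb_zero_right]
  | add x y hx hy ihx ihy =>
      rw [map_add, pb_add_right, map_add, smul_add, ← ihx, ← ihy]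
      simp only [add_mul, mul_add]
      abel
  | smul c x hx ihx =>
      rw [map_smul, pb_smul_right, map_smul, mul_smul_comm, smul_mul_assoc, ← smul_sub, ihx,
        smul_comm]
end

section
/- For all natural numbers m, n, the integral over the complex plane ∫_{ℂ} e^{−|z|²} · (conj z)^m · z^n dz (with respect to Lebesgue measure on ℂ ≅ ℝ²) equals π·n! if m = n, and equals 0 if m ≠ n. (This is the moment computation underlying the resolution of the identity I = (1/π)∫_{ℂ} |z⟩⟨z| e^{−|z|²} d²z for the holomorphic bosonic coherent states |z⟩ = Σ_n (zⁿ/√n!)|n⟩.) -/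
open Complex MeasureTheory Set
open scoped Real

private lemma gm_ang_zero (k : ℤ) (hk : (k : ℂ) ≠ 0) :
    ∫ θ : ℝ in Ioo (-π) π, Complex.exp ((k : ℂ) * θ * Complex.I) = 0 := by
  have hπ : (-π : ℝ) ≤ π := by linarith [Real.pi_pos]
  have hcI : (k : ℂ) * Complex.I ≠ 0 := mul_ne_zero hk Complex.I_ne_zero
  rw [← integral_Ioc_eq_integral_Ioo, ← intervalIntegral.integral_of_le hπ]
  have h0 : ∀ θ : ℝ, (k : ℂ) * θ * Complex.I = ((k : ℂ) * Complex.I) * θ := fun θ => by ring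
  simp_rw [h0]
  rw [integral_exp_mul_complex hcI]
  have h1 : (k : ℂ) * Complex.I * (π : ℝ) = (k : ℤ) * ((π : ℂ) * Complex.I) := by  ring
  have h2 : (k : ℂ) * Complex.I * ((-π : ℝ) : ℂ) = ((-k : ℤ) : ℂ) * ((π : ℂ) * Complex.I) := by
    push_cast; ring
  rw [h1, h2, Complex.exp_int_mul, Complex.exp_int_mul, Complex.exp_pi_mul_I]
  have h3 : ((-1 : ℂ)) ^ (-k) = ((-1 : ℂ)) ^ k := by
    rw [zpow_neg]
    refine inv_eq_of_mul_eq_one_left ?_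
    rw [← mul_zpow]; norm_num
  rw [h3, sub_self, zero_div]

private lemma gm_radial (n : ℕ) :
    ∫ r in Ioi (0 : ℝ), r ^ (n + n + 1) * Real.exp (-r ^ 2) = (n.factorial : ℝ) / 2 := by
  calc ∫ r in Ioi (0 : ℝ), r ^ (n + n + 1) * Real.exp (-r ^ 2)
      = ∫ r in Ioi (0 : ℝ), r ^ (((n + n + 1 : ℕ) : ℝ)) * Real.exp (-r ^ (2 : ℝ)) := by
        refine setIntegral_congr_fun measurableSet_Ioi fun r _ => ?_
        rw [Real.rpow_natCast, show (2 : ℝ) = ((2 : ℕ) : ℝ) by norm_num, Real.rpow_natCast]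
    _ = (1 / 2) * Real.Gamma ((((n + n + 1 : ℕ) : ℝ) + 1) / 2) :=
        integral_rpow_mul_exp_neg_rpow two_pos
          (lt_of_lt_of_le neg_one_lt_zero (by positivity))
    _ = (n.factorial : ℝ) / 2 := by
        rw [show (((n + n + 1 : ℕ) : ℝ) + 1) / 2 = (n : ℝ) + 1 by push_cast; ring,
          Real.Gamma_nat_eq_factorial]
        ring

/-- Moments of the Gaussian measure on `ℂ`: the resolution of the identity for
bosonic coherent states. -/
theorem gaussian_moments (m n : ℕ) :
    ∫ z : ℂ, Complex.exp (-((z.re : ℂ) ^ 2 + (z.im : ℂ) ^ 2)) * (starRingEnd ℂ) z ^ m * z ^ n =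
      if m = n then ((Real.pi : ℂ) * (n.factorial : ℂ)) else 0 := by
  have key : ∀ p ∈ Ioi (0 : ℝ) ×ˢ Ioo (-π) π,
      p.1 • (Complex.exp (-(((Complex.polarCoord.symm p).re : ℂ) ^ 2 +
          ((Complex.polarCoord.symm p).im : ℂ) ^ 2)) *
        (starRingEnd ℂ) (Complex.polarCoord.symm p) ^ m * (Complex.polarCoord.symm p) ^ n) =
      ((p.1 : ℂ) ^ (m + n + 1) * Complex.exp (-(p.1 : ℂ) ^ 2)) *
        Complex.exp (((n : ℂ) - m) * p.2 * Complex.I) := by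
    rintro ⟨r, θ⟩ ⟨hr, -⟩
    simp only [mem_Ioi] at hr
    have hz : Complex.polarCoord.symm (r, θ) = (r : ℂ) * Complex.exp (θ * Complex.I) := by
      rw [Complex.polarCoord_symm_apply, Complex.exp_mul_I]
      simp [Complex.ofReal_cos, Complex.ofReal_sin]
    have habs : ((Complex.polarCoord.symm (r, θ)).re : ℂ) ^ 2 +
        ((Complex.polarCoord.symm (r, θ)).im : ℂ) ^ 2 = (r : ℂ) ^ 2 := by
      have h1 : ((Complex.polarCoord.symm (r, θ)).re : ℂ) ^ 2 +
          ((Complex.polarCoord.symm (r, θ)).im : ℂ) ^ 2 =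
          ((‖Complex.polarCoord.symm (r, θ)‖ ^ 2 : ℝ) : ℂ) := by
        rw [Complex.sq_norm, Complex.normSq_apply]; push_cast; ring
      rw [h1, Complex.norm_polarCoord_symm, abs_of_pos hr]; push_cast; ring
    have hconj : (starRingEnd ℂ) (Complex.polarCoord.symm (r, θ)) =
        (r : ℂ) * Complex.exp (-(θ : ℂ) * Complex.I) := by
      rw [hz, map_mul, Complex.conj_ofReal, ← Complex.exp_conj, map_mul, Complex.conj_ofReal,
        Complex.conj_I, mul_neg, ← neg_mul]
    have he : Complex.exp (-(θ : ℂ) * Complex.I) ^ m * Complex.exp ((θ : ℂ) * Complex.I) ^ n =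
        Complex.exp (((n : ℂ) - m) * θ * Complex.I) := by
      rw [← Complex.exp_nat_mul, ← Complex.exp_nat_mul, ← Complex.exp_add]
      congr 1;  ring
    rw [habs, hconj, hz, Complex.real_smul]
    calc (r : ℂ) * (Complex.exp (-(r : ℂ) ^ 2) *
          ((r : ℂ) * Complex.exp (-(θ : ℂ) * Complex.I)) ^ m *
          ((r : ℂ) * Complex.exp ((θ : ℂ) * Complex.I)) ^ n)
        = ((r : ℂ) ^ (m + n + 1) * Complex.exp (-(r : ℂ) ^ 2)) *
          (Complex.exp (-(θ : ℂ) * Complex.I) ^ m * Complex.exp ((θ : ℂ) * Complex.I) ^ n) := by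
          simp only [mul_pow, pow_add, pow_one]; ring
      _ = _ := by rw [he]
  rw [← Complex.integral_comp_polarCoord_symm, polarCoord_target,
    setIntegral_congr_fun (measurableSet_Ioi.prod measurableSet_Ioo) key, Measure.volume_eq_prod,
    setIntegral_prod_mul (fun r : ℝ => (r : ℂ) ^ (m + n + 1) * Complex.exp (-(r : ℂ) ^ 2))
      (fun θ : ℝ => Complex.exp (((n : ℂ) - m) * θ * Complex.I))]
  by_cases h : m = n
  · subst h
    have hang : ∫ θ : ℝ in Ioo (-π) π, Complex.exp (((m : ℂ) - m) * θ * Complex.I) =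
        ((2 * π : ℝ) : ℂ) := by
      simp only [sub_self, zero_mul, Complex.exp_zero]
      rw [setIntegral_const, Real.volume_real_Ioo_of_le (by linarith [Real.pi_pos]), sub_neg_eq_add,
        ← two_mul]
      simp [Complex.real_smul]
    have hrad : (∫ r in Ioi (0 : ℝ), (r : ℂ) ^ (m + m + 1) * Complex.exp (-(r : ℂ) ^ 2)) =
        (((m.factorial : ℝ) / 2 : ℝ) : ℂ) := by
      calc ∫ r in Ioi (0 : ℝ), (r : ℂ) ^ (m + m + 1) * Complex.exp (-(r : ℂ) ^ 2)
          = ∫ r in Ioi (0 : ℝ), ((r ^ (m + m + 1) * Real.exp (-r ^ 2) : ℝ) : ℂ) := by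
            refine setIntegral_congr_fun measurableSet_Ioi fun r _ => ?_
            push_cast [Complex.ofReal_exp]; ring
        _ = (((m.factorial : ℝ) / 2 : ℝ) : ℂ) :=
            (integral_ofReal (𝕜 := ℂ)).trans (congrArg _ (gm_radial m))
    rw [hrad, hang, if_pos rfl]
    push_cast; ring
  · have hk : (((n : ℤ) - m : ℤ) : ℂ) ≠ 0 := by
      push_cast
      rw [sub_ne_zero]
      exact fun hc => h (Nat.cast_injective hc).symm
    have hang := gm_ang_zero ((n : ℤ) - m) hk
    have hcast : ∀ θ : ℝ, ((((n : ℤ) - m : ℤ) : ℂ)) * θ * Complex.I =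
        ((n : ℂ) - m) * θ * Complex.I := fun θ => by push_cast; ring
    simp_rw [hcast] at hang
    rw [hang, mul_zero, if_neg h]
end

section
/- For all natural numbers N and m with m ≤ N, the integral over the complex plane ∫_{ℂ} |z|^{2m} / (1 + |z|²)^{N+2} dz (with respect to Lebesgue measure on ℂ ≅ ℝ²) equals π · m! · (N−m)! / (N+1)!. (This is the diagonal moment computation underlying the resolution of the identity I = ((2s+1)/π)∫_{ℂ} |z⟩_s⟨z|_s (1+|z|²)^{−2s−2} d²z for the holomorphic spin-s coherent states, with N = 2s.) -/
open MeasureTheory Set Filter Topology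

lemma aux_tend (k : ℕ) (hk : 2 ≤ k) :
    Tendsto (fun u : ℝ => -(((k:ℝ)-1)⁻¹ * ((1+u)^(k-1))⁻¹)) atTop (𝓝 0) := by
  have h : Tendsto (fun u : ℝ => (1+u)^(k-1)) atTop atTop :=
    (tendsto_pow_atTop (by omega : k - 1 ≠ 0)).comp
      (tendsto_atTop_add_const_left _ 1 tendsto_id)
  have h2 : Tendsto (fun u : ℝ => ((1+u)^(k-1))⁻¹) atTop (𝓝 0) := h.inv_tendsto_atTop
  simpa using (h2.const_mul (((k:ℝ)-1)⁻¹)).neg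

lemma aux_deriv (k : ℕ) (hk : 2 ≤ k) (x : ℝ) (hx : (0:ℝ) ≤ x) :
    HasDerivAt (fun u : ℝ => -(((k:ℝ)-1)⁻¹ * ((1+u)^(k-1))⁻¹)) (((1+x)^k)⁻¹) x := by
  have hpos : (0:ℝ) < 1 + x := by linarith
  have h : HasDerivAt (fun u : ℝ => (1+u)^(k-1)) ((k-1 : ℕ) * (1+x)^(k-1-1) * 1) x :=
    HasDerivAt.pow ((hasDerivAt_id x).const_add 1) _
  have h2 := (h.inv (by positivity)).const_mul (-(((k:ℝ)-1)⁻¹))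
  convert h2 using 1
  · rfl
  · rfl
  · ext u; simp only [Pi.inv_apply]; ring
  · have hk1 : ((k - 1 : ℕ) : ℝ) = (k:ℝ) - 1 := by
      push_cast [Nat.cast_sub (by omega : 1 ≤ k)]; ring
    rw [hk1]
    have hne : ((k:ℝ) - 1) ≠ 0 := by
      have : (2:ℝ) ≤ k := by exact_mod_cast hk
      linarith
    field_simp
    rw [← pow_mul, ← pow_add]
    congr 1
    omega

lemma aux_base (k : ℕ) (hk : 2 ≤ k) :
    ∫ u in Ioi (0:ℝ), ((1+u)^k)⁻¹ = ((k:ℝ) - 1)⁻¹ := by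
  have := integral_Ioi_of_hasDerivAt_of_nonneg' (fun x hx => aux_deriv k hk x hx)
    (fun x hx => by have : (0:ℝ) < x := hx; positivity) (aux_tend k hk)
  rw [this]; simp

lemma aux_base_int (k : ℕ) (hk : 2 ≤ k) :
    IntegrableOn (fun u : ℝ => ((1+u)^k)⁻¹) (Ioi (0:ℝ)) :=
  integrableOn_Ioi_deriv_of_nonneg' (fun x hx => aux_deriv k hk x hx)
    (fun x hx => by have : (0:ℝ) < x := hx; positivity) (aux_tend k hk)

lemma aux_int (m k : ℕ) (hk : m + 2 ≤ k) :
    IntegrableOn (fun u : ℝ => u^m / (1+u)^k) (Ioi (0:ℝ)) := by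
  have hmeas : AEStronglyMeasurable (fun u : ℝ => u^m / (1+u)^k)
      (volume.restrict (Ioi (0:ℝ))) := by
    apply Measurable.aestronglyMeasurable
    fun_prop
  refine Integrable.mono' (aux_base_int (k - m) (by omega)) hmeas ?_
  filter_upwards [ae_restrict_mem measurableSet_Ioi] with x hx
  have hx0 : (0:ℝ) < x := hx
  have hpos : (0:ℝ) < 1 + x := by linarith
  rw [Real.norm_eq_abs, abs_of_nonneg (by positivity)]
  have e : (1+x)^k = (1+x)^(k-m) * (1+x)^m := by
    rw [← pow_add]; congr 1; omega
  rw [div_le_iff₀ (by positivity), inv_mul_eq_div, le_div_iff₀ (by positivity), e]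
  have : x^m ≤ (1+x)^m := pow_le_pow_left₀ hx0.le (by linarith) m
  nlinarith [pow_pos hpos (k-m), pow_pos hpos m, pow_nonneg hx0.le m]

lemma aux_K : ∀ (m k : ℕ), m + 2 ≤ k →
    ∫ u in Ioi (0:ℝ), u^m / (1+u)^k
      = (m.factorial : ℝ) * ((k - m - 2).factorial : ℝ) / ((k-1).factorial : ℝ) := by
  intro m
  induction m with
  | zero =>
    intro k hk
    have h1 : (k-1) = (k-2) + 1 := by omega
    rw [show (∫ u in Ioi (0:ℝ), u^0 / (1+u)^k) = ∫ u in Ioi (0:ℝ), ((1+u)^k)⁻¹ by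
      congr 1; ext u; simp [div_eq_mul_inv], aux_base k hk, h1, Nat.factorial_succ]
    have hfac : (0:ℝ) < ((k-2).factorial : ℝ) := by exact_mod_cast (k-2).factorial_pos
    have hcast : ((k:ℝ) - 1) = ((k-2 : ℕ) : ℝ) + 1 := by
      have : ((k-1 : ℕ) : ℝ) = (k:ℝ) - 1 := by
        push_cast [Nat.cast_sub (by omega : 1 ≤ k)]; ring
      rw [← this, h1]; push_cast; ring
    rw [hcast, Nat.sub_zero]
    rw [mul_comm, eq_div_iff (by positivity), Nat.factorial_zero, Nat.cast_one, mul_one]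
    push_cast
    rw [inv_mul_cancel_left₀ (by positivity)]
  | succ m ih =>
    intro k hk
    have e : (∫ u in Ioi (0:ℝ), u^(m+1) / (1+u)^k)
        = (∫ u in Ioi (0:ℝ), u^m / (1+u)^(k-1)) - ∫ u in Ioi (0:ℝ), u^m / (1+u)^k := by
      rw [← integral_sub (aux_int m (k-1) (by omega)) (aux_int m k (by omega))]
      apply setIntegral_congr_fun measurableSet_Ioi
      intro x hx
      have hx0 : (0:ℝ) < x := hx
      have hpos : (0:ℝ) < 1 + x := by linarith
      have hk1 : (1+x)^k = (1+x)^(k-1) * (1+x) := by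
        rw [← pow_succ]; congr 1; omega
      field_simp [hk1]
      rw [hk1]; ring
    rw [e, ih (k-1) (by omega), ih k (by omega)]
    have e1 : k - 1 - m - 2 = k - (m+1) - 2 := by omega
    have e2 : k - 1 - 1 = k - 2 := by omega
    have e3 : k - m - 2 = (k - (m+1) - 2) + 1 := by omega
    have e4 : k - 1 = (k - 2) + 1 := by omega
    rw [e1, e2, e3, e4, Nat.factorial_succ, Nat.factorial_succ, Nat.factorial_succ]
    have hrel : ((k - 2 : ℕ) : ℝ) + 1 = (((k - (m+1) - 2 : ℕ) : ℝ) + 1) + (m + 1) := by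
      have : (k - 2) = (k - (m+1) - 2) + 1 + m := by omega
      rw [this]; push_cast; ring
    have f1 : (0:ℝ) < ((k-2).factorial : ℝ) := by exact_mod_cast (k-2).factorial_pos
    have f2 : (0:ℝ) < (((k - (m+1) - 2)).factorial : ℝ) := by
      exact_mod_cast ((k - (m+1) - 2)).factorial_pos
    have f3 : (0:ℝ) < ((k-2 : ℕ) : ℝ) + 1 := by positivity
    push_cast
    rw [hrel]
    field_simp
    ring

lemma aux_half (m N : ℕ) :
    ∫ y in Ioi (0:ℝ), y * ((y^2)^m / (1+y^2)^(N+2))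
      = (1/2) * ∫ u in Ioi (0:ℝ), u^m / (1+u)^(N+2) := by
  have h := integral_comp_rpow_Ioi (fun u : ℝ => u^m / (1+u)^(N+2)) (p := 2) two_ne_zero
  rw [← h, ← integral_const_mul]
  apply setIntegral_congr_fun measurableSet_Ioi
  intro x hx
  have hx0 : (0:ℝ) < x := hx
  have e1 : x ^ (2:ℝ) = x^2 := by
    rw [show (2:ℝ) = ((2:ℕ):ℝ) by norm_num, Real.rpow_natCast]
  have e2 : x ^ ((2:ℝ) - 1) = x := by
    norm_num
  simp only [smul_eq_mul, e1, e2, abs_two]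
  ring

/-- Diagonal moments for the spin coherent-state resolution of the identity. -/
theorem sphere_diagonal_moments (N m : ℕ) (h : m ≤ N) :
    ∫ z : ℂ, (z.re ^ 2 + z.im ^ 2) ^ m / (1 + (z.re ^ 2 + z.im ^ 2)) ^ (N + 2) =
      Real.pi * (m.factorial : ℝ) * ((N - m).factorial : ℝ) / ((N + 1).factorial : ℝ) := by
  have hre : ∀ z : ℂ, z.re ^ 2 + z.im ^ 2 = ‖z‖^2 := by
    intro z
    rw [Complex.sq_norm, Complex.normSq_apply]
    ring
  calc ∫ z : ℂ, (z.re ^ 2 + z.im ^ 2) ^ m / (1 + (z.re ^ 2 + z.im ^ 2)) ^ (N + 2)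
      = ∫ z : ℂ, (fun r : ℝ => (r^2)^m / (1+r^2)^(N+2)) ‖z‖ := by
        congr 1; ext z; rw [hre z]
    _ = (Module.finrank ℝ ℂ) • (volume (Metric.ball (0:ℂ) 1)).toReal •
          ∫ y in Ioi (0:ℝ), y ^ (Module.finrank ℝ ℂ - 1) • ((y^2)^m / (1+y^2)^(N+2)) :=
        MeasureTheory.integral_fun_norm_addHaar volume
          (fun r : ℝ => (r^2)^m / (1+r^2)^(N+2))
    _ = Real.pi * (m.factorial : ℝ) * ((N - m).factorial : ℝ) / ((N + 1).factorial : ℝ) := by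
        rw [Complex.finrank_real_complex, Complex.volume_ball]
        simp only [smul_eq_mul, nsmul_eq_mul, one_pow, ENNReal.ofReal_one, one_mul,
          ENNReal.coe_toReal, NNReal.coe_real_pi, Nat.cast_ofNat,
          show 2 - 1 = 1 from rfl, pow_one]
        rw [aux_half m N, aux_K m (N+2) (by omega)]
        have e1 : N + 2 - m - 2 = N - m := by omega
        have e2 : N + 2 - 1 = N + 1 := by omega
        rw [e1, e2]
        ring
end

section
/- For all natural numbers N, a, b with a ≠ b and a + b < 2N + 2, the integral over the complex plane ∫_{ℂ} (conj z)^a · z^b / (1 + |z|²)^{N+2} dz (with respect to Lebesgue measure on ℂ ≅ ℝ²) equals 0. (This is the off-diagonal orthogonality underlying the resolution of the identity for the spin coherent states on the 2-sphere, with N = 2s.) -/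
open MeasureTheory Complex

/-- Off-diagonal orthogonality for the spin coherent-state resolution of the identity. -/
theorem sphere_offdiagonal_moments (N a b : ℕ) (hab : a ≠ b) (hlt : a + b < 2 * N + 2) :
    ∫ z : ℂ, (starRingEnd ℂ) z ^ a * z ^ b /
        (((1 + (z.re ^ 2 + z.im ^ 2) : ℝ) : ℂ) ^ (N + 2)) = 0 := by
  set f : ℂ → ℂ := fun z => (starRingEnd ℂ) z ^ a * z ^ b /
        (((1 + (z.re ^ 2 + z.im ^ 2) : ℝ) : ℂ) ^ (N + 2)) with hf
  set I : ℂ := ∫ z : ℂ, f z with hI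
  have hm : ((b : ℝ) - a) ≠ 0 := sub_ne_zero.mpr (by exact_mod_cast hab.symm)
  set θ : ℝ := Real.pi / ((b : ℝ) - a) with hθ
  set u : Circle := Circle.exp θ with hu
  have hmp : MeasurePreserving (rotation u) := (rotation u).measurePreserving
  have hcomp : ∫ z : ℂ, f (rotation u z) = I :=
    hmp.integral_comp (rotation u).toHomeomorph.measurableEmbedding f
  have hnorm : ∀ z : ℂ, (((u : ℂ) * z).re ^ 2 + ((u : ℂ) * z).im ^ 2)
      = (z.re ^ 2 + z.im ^ 2) := by
    intro z
    have h1 : ∀ w : ℂ, w.re ^ 2 + w.im ^ 2 = Complex.normSq w := by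
      intro w; simp [Complex.normSq_apply]; ring
    rw [h1, h1, Complex.normSq_mul]
    have : Complex.normSq (u : ℂ) = 1 := by
      rw [Complex.normSq_eq_norm_sq, u.norm_coe, one_pow]
    rw [this, one_mul]
  have hpt : ∀ z : ℂ, f (rotation u z) =
      ((starRingEnd ℂ) (u : ℂ) ^ a * (u : ℂ) ^ b) * f z := by
    intro z
    simp only [hf, rotation_apply, map_mul, mul_pow, hnorm]
    ring
  have hfac : (starRingEnd ℂ) (u : ℂ) ^ a * (u : ℂ) ^ b = -1 := by
    rw [hu, Circle.coe_exp, ← Complex.exp_conj]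
    simp only [map_mul, Complex.conj_ofReal, Complex.conj_I, mul_neg]
    rw [← Complex.exp_nat_mul, ← Complex.exp_nat_mul, ← Complex.exp_add]
    have : (a : ℂ) * -(θ * Complex.I) + (b : ℂ) * (θ * Complex.I)
        = ((((b : ℝ) - a) * θ : ℝ) : ℂ) * Complex.I := by
      push_cast; ring
    rw [this]
    have : (((b : ℝ) - a) * θ) = Real.pi := by
      rw [hθ]; field_simp
    rw [this, Complex.exp_pi_mul_I]
  have key : I = -I := by
    calc I = ∫ z : ℂ, f (rotation u z) := hcomp.symm
    _ = ∫ z : ℂ, ((starRingEnd ℂ) (u : ℂ) ^ a * (u : ℂ) ^ b) * f z := by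
        simp_rw [hpt]
    _ = ((starRingEnd ℂ) (u : ℂ) ^ a * (u : ℂ) ^ b) * I := integral_const_mul _ _
    _ = -I := by rw [hfac]; ring
  have : (2 : ℂ) * I = 0 := by linear_combination key
  simpa using (mul_eq_zero.mp this).resolve_left two_ne_zero
end

section
/- Let Φ : ℂ → ℂ be differentiable as a map of real normed spaces. Then Φ satisfies the holomorphic-polarization equation (∂_x Φ)(z) + i·(∂_y Φ)(z) = −z·Φ(z) for all z ∈ ℂ (equivalently ∂Φ/∂z̄ = −(z/2)Φ, i.e. D_{z̄}Φ = 0 for the connection A = (i/2)(z̄dz − zdz̄)) if and only if the function z ↦ Φ(z)·exp(|z|²/2) is complex-differentiable on all of ℂ, i.e. Φ(z) = φ(z)·e^{−|z|²/2} for an entire function φ. -/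
open Complex

private lemma cr_iff' {z : ℂ} (f : ℂ → ℂ) (hf : DifferentiableAt ℝ f z) :
    DifferentiableAt ℂ f z ↔
      fderiv ℝ f z Complex.I = Complex.I * fderiv ℝ f z 1 := by
  constructor
  · intro h
    have h2 := h.fderiv_restrictScalars ℝ
    rw [h2]
    simp only [ContinuousLinearMap.coe_restrictScalars']
    have : (Complex.I : ℂ) = Complex.I • (1 : ℂ) := by simp
    rw [this, map_smul]
    simp [smul_eq_mul]
  · intro hCR
    rw [differentiableAt_iff_restrictScalars ℝ hf]
    refine ⟨(ContinuousLinearMap.id ℂ ℂ).smulRight (fderiv ℝ f z 1), ?_⟩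
    ext w
    simp only [ContinuousLinearMap.coe_restrictScalars', ContinuousLinearMap.smulRight_apply,
      ContinuousLinearMap.id_apply, smul_eq_mul]
    have hw : (fderiv ℝ f z) w = w.re • (fderiv ℝ f z) 1 + w.im • (fderiv ℝ f z) Complex.I := by
      conv_lhs => rw [← Complex.re_add_im w]
      rw [show (↑w.re + ↑w.im * Complex.I : ℂ) = w.re • (1:ℂ) + w.im • Complex.I by
        simp [Complex.real_smul]]
      rw [map_add, map_smul, map_smul]
    rw [hw, hCR]
    simp only [Complex.real_smul]
    conv_lhs => rw [← Complex.re_add_im w]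
    ring

/-- Holomorphic polarization on the plane: `D_z̄ Φ = 0` iff `Φ(z) = φ(z)e^{−|z|²/2}`
with `φ` entire. -/
theorem holomorphic_polarization_plane (Φ : ℂ → ℂ) (hΦ : Differentiable ℝ Φ) :
    (∀ z : ℂ, fderiv ℝ Φ z 1 + Complex.I * fderiv ℝ Φ z Complex.I = -z * Φ z) ↔
      Differentiable ℂ (fun z : ℂ => Φ z * ((Real.exp ((z.re ^ 2 + z.im ^ 2) / 2) : ℝ) : ℂ)) := by
  set E : ℂ → ℂ := fun z => ((Real.exp ((z.re ^ 2 + z.im ^ 2) / 2) : ℝ) : ℂ) with hEdef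
  set g : ℂ → ℂ := fun z => Φ z * E z with hgdef
  -- derivative of the quadratic exponent
  have hq : ∀ z : ℂ, HasFDerivAt (fun w : ℂ => (w.re ^ 2 + w.im ^ 2) / 2)
      (z.re • Complex.reCLM + z.im • Complex.imCLM) z := by
    intro z
    have hre : HasFDerivAt (fun w : ℂ => w.re) Complex.reCLM z := Complex.reCLM.hasFDerivAt
    have him : HasFDerivAt (fun w : ℂ => w.im) Complex.imCLM z := Complex.imCLM.hasFDerivAt
    have hfun : (fun w : ℂ => (w.re ^ 2 + w.im ^ 2) / 2)
        = fun w : ℂ => (2⁻¹ : ℝ) * (w.re * w.re + w.im * w.im) := by funext w; ring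
    rw [hfun]
    refine (((hre.mul hre).add (him.mul him)).const_mul (2⁻¹ : ℝ)).congr_fderiv ?_
    ext w
    simp
    ring
  have hE : ∀ z : ℂ, HasFDerivAt E
      (Complex.ofRealCLM.comp
        (Real.exp ((z.re ^ 2 + z.im ^ 2) / 2) •
          (z.re • Complex.reCLM + z.im • Complex.imCLM))) z := by
    intro z
    exact Complex.ofRealCLM.hasFDerivAt.comp z
      ((Real.hasDerivAt_exp _).comp_hasFDerivAt z (hq z))
  have hg : ∀ z : ℂ, HasFDerivAt g
      (Φ z • (Complex.ofRealCLM.comp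
        (Real.exp ((z.re ^ 2 + z.im ^ 2) / 2) •
          (z.re • Complex.reCLM + z.im • Complex.imCLM))) + E z • (fderiv ℝ Φ z)) z :=
    fun z => ((hΦ z).hasFDerivAt).mul (hE z)
  have hg1 : ∀ z : ℂ, fderiv ℝ g z 1 = Φ z * (E z * z.re) + E z * fderiv ℝ Φ z 1 := by
    intro z
    rw [(hg z).fderiv]
    simp [hEdef, smul_eq_mul, Complex.real_smul, Complex.ofReal_mul]
  have hgI : ∀ z : ℂ, fderiv ℝ g z Complex.I = Φ z * (E z * z.im) + E z * fderiv ℝ Φ z Complex.I := by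
    intro z
    rw [(hg z).fderiv]
    simp [hEdef, smul_eq_mul, Complex.real_smul, Complex.ofReal_mul]
  have hgdiff : Differentiable ℝ g := fun z => (hg z).differentiableAt
  have hE0 : ∀ z : ℂ, E z ≠ 0 := by
    intro z
    simp [hEdef, Real.exp_ne_zero]
  rw [show Differentiable ℂ g ↔ ∀ z, DifferentiableAt ℂ g z from Iff.rfl]
  apply forall_congr'
  intro z
  rw [cr_iff' g (hgdiff z), hg1 z, hgI z]
  have hz : (z.re : ℂ) + z.im * Complex.I = z := Complex.re_add_im z
  have hI : Complex.I * Complex.I = -1 := Complex.I_mul_I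
  constructor
  · intro h
    linear_combination (-Complex.I * E z) * h + (-Complex.I * E z * Φ z) * hz +
      (E z * fderiv ℝ Φ z Complex.I + E z * Φ z * (z.im : ℂ)) * hI
  · intro h2
    have key : E z * (fderiv ℝ Φ z 1 + Complex.I * fderiv ℝ Φ z Complex.I) =
        E z * (-z * Φ z) := by
      linear_combination Complex.I * h2 + (-(E z) * Φ z) * hz +
        (E z * fderiv ℝ Φ z 1 + E z * Φ z * (z.re : ℂ)) * hI
    exact mul_left_cancel₀ (hE0 z) key
end
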